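/- Let k ∈ 2ℕ. For any γ ∈ SL₂(ℝ) and any smooth function F : ℍ → ℂ, the operator ξ_k(F)(z) := 2i y^k · conj(∂F/∂z̄), with y = Im(z), satisfies ξ_k(F|_k γ) = (ξ_k F)|_{2−k} γ. -/

import Mathlib

open Complex

/-- The Wirtinger derivative `∂F/∂z̄ = (1/2)(∂F/∂x + i ∂F/∂y)`. -/
noncomputable def wirtBar (F : ℂ → ℂ) (z : ℂ) : ℂ :=
  (fderiv ℝ F z 1 + I * fderiv ℝ F z I) / 2

/-- The operator `ξ_k(F)(z) = 2i y^k · conj(∂F/∂z̄)(z)`, `y = Im z`. -/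
noncomputable def xi (k : ℤ) (F : ℂ → ℂ) (z : ℂ) : ℂ :=
  2 * I * (z.im : ℂ) ^ k * (starRingEnd ℂ) (wirtBar F z)

/-- The weight-`m` slash action `(F|_m γ)(z) = F((az+b)/(cz+d)) (cz+d)^{-m}`. -/
noncomputable def slashC (m : ℤ) (γ : Matrix (Fin 2) (Fin 2) ℝ) (F : ℂ → ℂ) (z : ℂ) : ℂ :=
  F (((γ 0 0 : ℂ) * z + (γ 0 1 : ℂ)) / ((γ 1 0 : ℂ) * z + (γ 1 1 : ℂ))) *
    ((γ 1 0 : ℂ) * z + (γ 1 1 : ℂ)) ^ (-m)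

lemma fderiv_real_holo {g : ℂ → ℂ} {z : ℂ} (hg : DifferentiableAt ℂ g z) (v : ℂ) :
    fderiv ℝ g z v = v * deriv g z := by
  rw [hg.fderiv_restrictScalars ℝ]
  rw [ContinuousLinearMap.coe_restrictScalars']
  calc fderiv ℂ g z v = fderiv ℂ g z (v • 1) := by simp
    _ = v • fderiv ℂ g z 1 := (fderiv ℂ g z).map_smul v 1
    _ = v * deriv g z := by rw [smul_eq_mul, fderiv_apply_one_eq_deriv]

lemma lin_decomp (L : ℂ →L[ℝ] ℂ) (w : ℂ) : L w = (w.re : ℂ) * L 1 + (w.im : ℂ) * L I := by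
  have h : w = (w.re : ℝ) • (1:ℂ) + (w.im : ℝ) • I := by
    simp [Complex.real_smul, Complex.re_add_im]
  calc L w = L ((w.re : ℝ) • (1:ℂ) + (w.im : ℝ) • I) := by rw [← h]
    _ = (w.re : ℝ) • L 1 + (w.im : ℝ) • L I := by rw [map_add, map_smul, map_smul]
    _ = (w.re : ℂ) * L 1 + (w.im : ℂ) * L I := by simp [Complex.real_smul]

lemma conj_eq' (r : ℂ) : (starRingEnd ℂ) r = (r.re : ℂ) - r.im * I := by
  apply Complex.ext <;> simp

lemma wirtBar_comp {F g : ℂ → ℂ} {z : ℂ} (hF : DifferentiableAt ℝ F (g z))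
    (hg : DifferentiableAt ℂ g z) :
    wirtBar (fun w => F (g w)) z = (starRingEnd ℂ) (deriv g z) * wirtBar F (g z) := by
  have hco : fderiv ℝ (fun w => F (g w)) z
      = (fderiv ℝ F (g z)).comp (fderiv ℝ g z) :=
    fderiv_comp z hF (hg.restrictScalars ℝ)
  unfold wirtBar
  rw [hco]
  simp only [ContinuousLinearMap.comp_apply, fderiv_real_holo hg]
  rw [lin_decomp (fderiv ℝ F (g z)) (1 * deriv g z),
      lin_decomp (fderiv ℝ F (g z)) (I * deriv g z), conj_eq']
  simp only [one_mul, Complex.mul_re, Complex.mul_im, Complex.I_re, Complex.I_im]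
  push_cast
  ring_nf
  rw [Complex.I_sq]
  ring

lemma wirtBar_holo {g : ℂ → ℂ} {z : ℂ} (hg : DifferentiableAt ℂ g z) : wirtBar g z = 0 := by
  unfold wirtBar
  rw [fderiv_real_holo hg, fderiv_real_holo hg]
  ring_nf
  rw [Complex.I_sq]
  ring

lemma wirtBar_mul {p q : ℂ → ℂ} {z : ℂ} (hp : DifferentiableAt ℝ p z)
    (hq : DifferentiableAt ℝ q z) :
    wirtBar (fun w => p w * q w) z = wirtBar p z * q z + p z * wirtBar q z := by
  unfold wirtBar
  rw [fderiv_fun_mul hp hq]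
  simp only [ContinuousLinearMap.add_apply, ContinuousLinearMap.smul_apply, smul_eq_mul]
  ring

lemma zpow_aux {j y : ℂ} (hj : j ≠ 0) (n : ℤ) :
    y ^ n * (1 / j ^ 2) * ((starRingEnd ℂ) j) ^ (-n)
      = (y / (j * (starRingEnd ℂ) j)) ^ n * j ^ (-(2 - n)) := by
  have hjc : (starRingEnd ℂ) j ≠ 0 := by simpa using hj
  have h1 : j ^ n ≠ 0 := zpow_ne_zero n hj
  have h2 : (starRingEnd ℂ) j ^ n ≠ 0 := zpow_ne_zero n hjc
  rw [div_zpow, mul_zpow, neg_sub, zpow_sub₀ hj, zpow_neg]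
  field_simp

set_option linter.unusedVariables false in
/-- For `k ∈ 2ℕ`, `γ ∈ SL₂(ℝ)` and smooth `F`, on the upper half-plane
`ξ_k(F|_k γ) = (ξ_k F)|_{2-k} γ`. -/
theorem stmt4 (k : ℕ) (hke : Even k) (γ : Matrix.SpecialLinearGroup (Fin 2) ℝ)
    (F : ℂ → ℂ) (hF : ∀ z : ℂ, 0 < z.im → ContDiffAt ℝ (⊤ : ℕ∞) F z) :
    ∀ z : ℂ, 0 < z.im →
      xi (k : ℤ) (slashC (k : ℤ) (↑γ) F) z = slashC (2 - (k : ℤ)) (↑γ) (xi (k : ℤ) F) z := by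
  intro z hz
  set a : ℝ := (↑γ : Matrix (Fin 2) (Fin 2) ℝ) 0 0 with ha
  set b : ℝ := (↑γ : Matrix (Fin 2) (Fin 2) ℝ) 0 1 with hb
  set c : ℝ := (↑γ : Matrix (Fin 2) (Fin 2) ℝ) 1 0 with hc
  set d : ℝ := (↑γ : Matrix (Fin 2) (Fin 2) ℝ) 1 1 with hd
  have hdet : a * d - b * c = 1 := by
    have h := γ.2
    rwa [Matrix.det_fin_two] at h
  set j : ℂ := (c : ℂ) * z + (d : ℂ) with hjdef
  have hj : j ≠ 0 := by
    intro h0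
    have him : c * z.im = 0 := by
      have := congrArg Complex.im h0
      simpa [hjdef] using this
    have hc0 : c = 0 := by
      rcases mul_eq_zero.1 him with h | h
      · exact h
      · exact absurd h (ne_of_gt hz)
    have hre : d = 0 := by
      have := congrArg Complex.re h0
      simpa [hjdef, hc0] using this
    rw [hc0, hre] at hdet
    simp at hdet
  set g : ℂ → ℂ := fun w => ((a : ℂ) * w + (b : ℂ)) / ((c : ℂ) * w + (d : ℂ)) with hgdef
  set w : ℂ := g z with hwdef
  have hwim : w.im = z.im / Complex.normSq j := by
    rw [hwdef, hgdef]
    simp only [← hjdef]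
    rw [Complex.div_im]
    have hns : Complex.normSq j ≠ 0 := by
      simpa [Complex.normSq_eq_zero] using hj
    field_simp
    simp only [hjdef, Complex.add_im, Complex.add_re, Complex.mul_im, Complex.mul_re,
      Complex.ofReal_re, Complex.ofReal_im]
    ring_nf
    nlinarith [hdet, sq_nonneg z.im]
  have hns : 0 < Complex.normSq j := by
    simpa [Complex.normSq_pos] using hj
  have hw : 0 < w.im := by
    rw [hwim]; positivity
  -- derivative of g
  have h1 : HasDerivAt (fun u : ℂ => (a : ℂ) * u + (b : ℂ)) (a : ℂ) z := by
    simpa using ((hasDerivAt_id z).const_mul (a : ℂ)).add_const (b : ℂ)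
  have h2 : HasDerivAt (fun u : ℂ => (c : ℂ) * u + (d : ℂ)) (c : ℂ) z := by
    simpa using ((hasDerivAt_id z).const_mul (c : ℂ)).add_const (d : ℂ)
  have hgd : HasDerivAt g (1 / j ^ 2) z := by
    have h := h1.fun_div h2 hj
    refine h.congr_deriv ?_
    rw [← hjdef]
    have hdc : (a : ℂ) * j - ((a : ℂ) * z + (b : ℂ)) * (c : ℂ) = 1 := by
      rw [hjdef]
      have : ((a : ℂ) * (d : ℂ) - (b : ℂ) * (c : ℂ)) = 1 := by
        exact_mod_cast congrArg (fun t : ℝ => (t : ℂ)) hdet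
      linear_combination this
    rw [hdc]
  have hg : DifferentiableAt ℂ g z := hgd.differentiableAt
  have hderiv : deriv g z = 1 / j ^ 2 := hgd.deriv
  -- h = j^(-k)
  have hh : DifferentiableAt ℂ (fun u : ℂ => ((c : ℂ) * u + (d : ℂ)) ^ (-(k : ℤ))) z := by
    apply DifferentiableAt.zpow
    · exact (differentiableAt_id.const_mul _).add_const _
    · left; exact hj
  have hFw : DifferentiableAt ℝ F w := (hF w hw).differentiableAt (by simp)
  have hFg : DifferentiableAt ℝ (fun u => F (g u)) z :=
    hFw.comp z (hg.restrictScalars ℝ)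
  have hslash : slashC (k : ℤ) (↑γ) F
      = fun u => F (g u) * ((c : ℂ) * u + (d : ℂ)) ^ (-(k : ℤ)) := by
    funext u
    rw [slashC, hgdef]
  have hwb : wirtBar (slashC (k : ℤ) (↑γ) F) z
      = (starRingEnd ℂ) (1 / j ^ 2) * wirtBar F w * j ^ (-(k : ℤ)) := by
    rw [hslash, wirtBar_mul hFg (hh.restrictScalars ℝ),
      wirtBar_comp hFw hg, wirtBar_holo hh, hderiv, ← hwdef, ← hjdef]
    ring
  rw [xi, hwb, slashC, xi]
  simp only [← hjdef, ← ha, ← hb, ← hc, ← hd]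
  have hwexp : ((a:ℂ) * z + (b:ℂ)) / j = w := by rw [hwdef, hgdef]
  rw [hwexp, map_mul, map_mul, map_zpow₀, Complex.conj_conj]
  have hwimc : (w.im : ℂ) = (z.im : ℂ) / (j * (starRingEnd ℂ) j) := by
    rw [hwim, Complex.mul_conj]
    push_cast
    ring
  rw [hwimc]
  have key := zpow_aux (y := (z.im : ℂ)) hj (k : ℤ)
  linear_combination (2 * I * (starRingEnd ℂ) (wirtBar F w)) * key
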